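/- If L is a Scott retract of a poset M that has one-step closure (i.e., there exist Scott-continuous maps s : L → M and r : M → L with r ∘ s = id_L), then L has one-step closure. The same statement holds with 'one-step closure' replaced by 'weak one-step closure'. -/

import Mathlib

open Set

section OrderDefs

variable {L : Type*} [Preorder L]

/-- Downward closure `↓A`. -/
def dw (A : Set L) : Set L := {x | ∃ a ∈ A, x ≤ a}

/-- Upward closure `↑A`. -/
def up (A : Set L) : Set L := {x | ∃ a ∈ A, a ≤ x}

/-- Scott closure of a set. -/
def scottCl (A : Set L) : Set L := @closure L (Topology.scott L Set.univ) A

/-- `A' = {x : ∃ directed D ⊆ ↓A with x = sup D}`. -/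
def oneStep (A : Set L) : Set L :=
  {x | ∃ D : Set L, D ⊆ dw A ∧ D.Nonempty ∧ DirectedOn (· ≤ ·) D ∧ IsLUB D x}

/-- `A'' = {x : ∃ directed D ⊆ ↓A with x ≤ sup D}`. -/
def weakOneStep (A : Set L) : Set L :=
  {x | ∃ D : Set L, D ⊆ dw A ∧ D.Nonempty ∧ DirectedOn (· ≤ ·) D ∧ ∃ y, IsLUB D y ∧ x ≤ y}

/-- A poset has one-step closure if `cl(A) = A'` for all `A`. -/
def HasOneStepClosure (L : Type*) [Preorder L] : Prop :=
  ∀ A : Set L, scottCl A = oneStep A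

/-- A poset has weak one-step closure if `cl(A) = A''` for all `A`. -/
def HasWeakOneStepClosure (L : Type*) [Preorder L] : Prop :=
  ∀ A : Set L, scottCl A = weakOneStep A

/-- Meet continuity: `x ≤ sup D` implies `x ∈ cl(↓D ∩ ↓x)`. -/
def MeetContinuous (L : Type*) [Preorder L] : Prop :=
  ∀ x : L, ∀ D : Set L, D.Nonempty → DirectedOn (· ≤ ·) D → ∀ s, IsLUB D s → x ≤ s →
    x ∈ scottCl (dw D ∩ dw ({x} : Set L))

/-- The way-below relation `x ≪ y`. -/
def wayBelow (x y : L) : Prop :=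
  ∀ D : Set L, D.Nonempty → DirectedOn (· ≤ ·) D → ∀ s, IsLUB D s → y ≤ s →
    (D ∩ up ({x} : Set L)).Nonempty

/-- The weakly way-below relation `x ≪_w y`. -/
def weaklyWayBelow (x y : L) : Prop :=
  ∀ D : Set L, D.Nonempty → DirectedOn (· ≤ ·) D → IsLUB D y →
    (D ∩ up ({x} : Set L)).Nonempty

/-- A continuous poset: each `⇓x` is directed with supremum `x`. -/
def ContinuousPoset (L : Type*) [Preorder L] : Prop :=
  ∀ x : L, {y | wayBelow y x}.Nonempty ∧ DirectedOn (· ≤ ·) {y | wayBelow y x} ∧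
    IsLUB {y | wayBelow y x} x

/-- An exact poset: each `⇓_w x` is directed with supremum `x`. -/
def ExactPoset (L : Type*) [Preorder L] : Prop :=
  ∀ x : L, {y | weaklyWayBelow y x}.Nonempty ∧ DirectedOn (· ≤ ·) {y | weaklyWayBelow y x} ∧
    IsLUB {y | weaklyWayBelow y x} x

/-- `F ≪ x` for a set `F`: every directed `D` with `sup D ≥ x` meets `↑F`. -/
def finWayBelow (F : Set L) (x : L) : Prop :=
  ∀ D : Set L, D.Nonempty → DirectedOn (· ≤ ·) D → ∀ s, IsLUB D s → x ≤ s →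
    (D ∩ up F).Nonempty

/-- A quasicontinuous poset: each `fin(x)` is a directed family (Smyth preorder)
with `↑x = ⋂_{F ∈ fin(x)} ↑F`. -/
def QuasicontinuousPoset (L : Type*) [Preorder L] : Prop :=
  ∀ x : L, {F : Set L | F.Finite ∧ finWayBelow F x}.Nonempty ∧
    DirectedOn (fun F G => up G ⊆ up F) {F : Set L | F.Finite ∧ finWayBelow F x} ∧
    up ({x} : Set L) = ⋂ F ∈ {F : Set L | F.Finite ∧ finWayBelow F x}, up F

/-- A dcpo: every (nonempty) directed subset has a least upper bound. -/
def IsDcpo (L : Type*) [Preorder L] : Prop :=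
  ∀ D : Set L, D.Nonempty → DirectedOn (· ≤ ·) D → ∃ x, IsLUB D x

end OrderDefs

/-! The inclusions `A' ⊆ A'' ⊆ cl(A)` hold in every poset, because Scott-closed sets are lower
sets closed under directed suprema. For the converse, let `x ∈ cl(A)`. Since `s` is continuous,
`s x ∈ cl(s A) = (s A)'`, witnessed by a directed `D ⊆ ↓(s A)` with `s x = sup D`. Then `r D` is
directed, lies in `↓(r (s A)) = ↓A`, and has supremum `r (s x) = x`, so `x ∈ A'`; the weak
version is the same argument with `≤` in place of `=`. -/

section ScottRetract

open Topology

variable {α β : Type*} [Preorder α] [Preorder β]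

lemma scottContinuous_of_continuous_scott {f : α → β}
    (hf : @Continuous α β (scott α univ) (scott β univ) f) : ScottContinuous f := by
  let := scott α univ
  let := scott β univ
  have : IsScott α univ := ⟨rfl⟩
  have : IsScott β univ := ⟨rfl⟩
  exact scottContinuousOn_univ.1
    ((IsScott.scottContinuousOn_iff_continuous (D := univ) fun _ _ _ ↦ trivial).2 hf)

lemma image_scottCl_subset_of_continuous {f : α → β}
    (hf : @Continuous α β (scott α univ) (scott β univ) f) (A : Set α) :
    f '' scottCl A ⊆ scottCl (f '' A) :=
  @image_closure_subset_closure_image _ _ (scott α univ) (scott β univ) _ _ hf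

lemma oneStep_subset_weakOneStep (A : Set α) : oneStep A ⊆ weakOneStep A :=
  fun x ⟨D, hDA, hDne, hDdir, hx⟩ ↦ ⟨D, hDA, hDne, hDdir, x, hx, le_rfl⟩

lemma weakOneStep_subset_scottCl (A : Set α) : weakOneStep A ⊆ scottCl A := by
  let := scott α univ
  have : IsScott α univ := ⟨rfl⟩
  obtain ⟨hlower, hdirSup⟩ :=
    IsScott.isClosed_iff_isLowerSet_and_dirSupClosed.1 (isClosed_closure : IsClosed (closure A))
  rintro x ⟨D, hDA, hDne, hDdir, y, hy, hxy⟩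
  have hD : D ⊆ closure A := fun d hd ↦
    let ⟨a, ha, hda⟩ := hDA hd
    hlower hda (subset_closure ha)
  exact hlower hxy (hdirSup hD hDne hDdir hy)

lemma oneStep_subset_scottCl (A : Set α) : oneStep A ⊆ scottCl A :=
  (oneStep_subset_weakOneStep A).trans (weakOneStep_subset_scottCl A)

lemma Monotone.image_dw_subset {f : α → β} (hf : Monotone f) (A : Set α) :
    f '' dw A ⊆ dw (f '' A) := by
  rintro _ ⟨x, ⟨a, ha, hxa⟩, rfl⟩
  exact ⟨f a, mem_image_of_mem f ha, hf hxa⟩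

lemma ScottContinuous.mem_oneStep_image {f : α → β} (hf : ScottContinuous f) {A : Set α}
    {x : α} (hx : x ∈ oneStep A) : f x ∈ oneStep (f '' A) := by
  obtain ⟨D, hDA, hDne, hDdir, hlub⟩ := hx
  exact ⟨f '' D, (image_mono hDA).trans (hf.monotone.image_dw_subset A), hDne.image f,
    hDdir.mono_comp fun _ _ h ↦ hf.monotone h, hf hDne hDdir hlub⟩

lemma ScottContinuous.mem_weakOneStep_image {f : α → β} (hf : ScottContinuous f) {A : Set α}
    {x : α} (hx : x ∈ weakOneStep A) : f x ∈ weakOneStep (f '' A) := by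
  obtain ⟨D, hDA, hDne, hDdir, y, hlub, hxy⟩ := hx
  exact ⟨f '' D, (image_mono hDA).trans (hf.monotone.image_dw_subset A), hDne.image f,
    hDdir.mono_comp fun _ _ h ↦ hf.monotone h, f y, hf hDne hDdir hlub, hf.monotone hxy⟩

end ScottRetract

/-- If `L` is a Scott retract of `M` (there are Scott-continuous `s : L → M`, `r : M → L`
with `r ∘ s = id`), then one-step closure (resp. weak one-step closure) of `M` is inherited
by `L`. -/
theorem scottRetract_oneStepClosure {L M : Type*} [PartialOrder L] [PartialOrder M]
    (s : L → M) (r : M → L)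
    (hs : @Continuous L M (Topology.scott L Set.univ) (Topology.scott M Set.univ) s)
    (hr : @Continuous M L (Topology.scott M Set.univ) (Topology.scott L Set.univ) r)
    (hrs : r ∘ s = id) :
    (HasOneStepClosure M → HasOneStepClosure L) ∧
      (HasWeakOneStepClosure M → HasWeakOneStepClosure L) := by
  have hr' : ScottContinuous r := scottContinuous_of_continuous_scott hr
  have hrs_apply : ∀ x, r (s x) = x := congrFun hrs
  have hrs_image : ∀ A : Set L, r '' (s '' A) = A := fun A ↦ by
    rw [← image_comp, hrs, image_id]
  have hs_scottCl : ∀ {A : Set L} {x : L}, x ∈ scottCl A → s x ∈ scottCl (s '' A) :=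
    fun hx ↦ image_scottCl_subset_of_continuous hs _ ⟨_, hx, rfl⟩
  refine ⟨fun hM A ↦ (oneStep_subset_scottCl A).antisymm' fun x hx ↦ ?_,
    fun hM A ↦ (weakOneStep_subset_scottCl A).antisymm' fun x hx ↦ ?_⟩
  · have := hr'.mem_oneStep_image (hM (s '' A) ▸ hs_scottCl hx)
    rwa [hrs_apply, hrs_image] at this
  · have := hr'.mem_weakOneStep_image (hM (s '' A) ▸ hs_scottCl hx)
    rwa [hrs_apply, hrs_image] at this
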